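/- For (a,b,c) ∈ ℂ³ define the Togliatti cubic f_{(a,b,c)}(x,y,z) = bc²·x²y − b²c·x²z − ac²·xy² + a²c·y²z + ab²·xz² − a²b·yz². Then: (i) f_{(a,b,c)} = (cx − az)(cy − bz)(bx − ay), so f_{(a,b,c)} is a product of three linear forms (in particular reducible whenever nonzero); (ii) f_{(a,b,c)} vanishes at the three coordinate points (1,0,0), (0,1,0), (0,0,1); and (iii) f_{(a,b,c)} and all of its partial derivatives of order ≤ 2 with respect to x, y, z vanish at the point (a,b,c), i.e. it has a triple point at P = (a,b,c). In particular f_{(a,b,c)} lies in the span of the six Togliatti monomials x²y, x²z, xy², y²z, xz², yz². -/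
import Mathlib
set_option maxHeartbeats 1000000


open MvPolynomial

/-- The Togliatti cubic f_{(a,b,c)} = bc²·x²y − b²c·x²z − ac²·xy² + a²c·y²z
+ ab²·xz² − a²b·yz². -/
noncomputable def togliattiCubic (a b c : ℂ) : MvPolynomial (Fin 3) ℂ :=
  C (b * c ^ 2) * (X 0 ^ 2 * X 1) - C (b ^ 2 * c) * (X 0 ^ 2 * X 2)
  - C (a * c ^ 2) * (X 0 * X 1 ^ 2) + C (a ^ 2 * c) * (X 1 ^ 2 * X 2)
  + C (a * b ^ 2) * (X 0 * X 2 ^ 2) - C (a ^ 2 * b) * (X 1 * X 2 ^ 2)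

/-- The six Togliatti monomials x²y, x²z, xy², y²z, xz², yz². -/
noncomputable def togliattiMonomials : Fin 6 → MvPolynomial (Fin 3) ℂ :=
  ![X 0 ^ 2 * X 1, X 0 ^ 2 * X 2, X 0 * X 1 ^ 2,
    X 1 ^ 2 * X 2, X 0 * X 2 ^ 2, X 1 * X 2 ^ 2]

/-- The Togliatti cubic f_{(a,b,c)} factors as (cx − az)(cy − bz)(bx − ay), so it
is a product of three linear forms; it vanishes at the three coordinate points,
has a triple point at (a,b,c), and lies in the span of the six Togliatti
monomials. -/
theorem togliatti_cubic_properties (a b c : ℂ) :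
    togliattiCubic a b c
        = (C c * X 0 - C a * X 2) * (C c * X 1 - C b * X 2) *
            (C b * X 0 - C a * X 1) ∧
    (eval ![1, 0, 0] (togliattiCubic a b c) = 0 ∧
      eval ![0, 1, 0] (togliattiCubic a b c) = 0 ∧
      eval ![0, 0, 1] (togliattiCubic a b c) = 0) ∧
    (eval ![a, b, c] (togliattiCubic a b c) = 0 ∧
      (∀ i : Fin 3, eval ![a, b, c] (pderiv i (togliattiCubic a b c)) = 0) ∧
      (∀ i j : Fin 3,
        eval ![a, b, c] (pderiv i (pderiv j (togliattiCubic a b c))) = 0)) ∧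
    togliattiCubic a b c ∈ Submodule.span ℂ (Set.range togliattiMonomials) := by
  refine ⟨?_, ⟨?_, ?_, ?_⟩, ⟨?_, ?_, ?_⟩, ?_⟩
  · simp only [togliattiCubic, map_mul, map_pow]; ring
  · simp [togliattiCubic]
  · simp [togliattiCubic]
  · simp [togliattiCubic]
  · simp [togliattiCubic]; ring
  · intro i
    fin_cases i <;>
      simp [togliattiCubic, pderiv_X, Pi.single_apply] <;> ring
  · intro i j
    fin_cases i <;> fin_cases j <;>
      simp [togliattiCubic, pderiv_X, Pi.single_apply] <;> ring
  · have h : togliattiCubic a b c =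
        (b * c ^ 2) • togliattiMonomials 0 + (-(b ^ 2 * c)) • togliattiMonomials 1
        + (-(a * c ^ 2)) • togliattiMonomials 2 + (a ^ 2 * c) • togliattiMonomials 3
        + (a * b ^ 2) • togliattiMonomials 4 + (-(a ^ 2 * b)) • togliattiMonomials 5 := by
      have e0 : togliattiMonomials 0 = X 0 ^ 2 * X 1 := rfl
      have e1 : togliattiMonomials 1 = X 0 ^ 2 * X 2 := rfl
      have e2 : togliattiMonomials 2 = X 0 * X 1 ^ 2 := rfl
      have e3 : togliattiMonomials 3 = X 1 ^ 2 * X 2 := rfl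
      have e4 : togliattiMonomials 4 = X 0 * X 2 ^ 2 := rfl
      have e5 : togliattiMonomials 5 = X 1 * X 2 ^ 2 := rfl
      rw [e0, e1, e2, e3, e4, e5]
      simp only [togliattiCubic, smul_eq_C_mul, map_mul, map_pow, map_neg]
      ring
    rw [h]
    repeat'
      first
      | exact Submodule.smul_mem _ _ (Submodule.subset_span (Set.mem_range_self _))
      | apply Submodule.add_mem
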